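/- For m, k, n, l ∈ ℕ₀ with 0 ≤ k < 2^m, 0 ≤ l < 2^n, and t ∈ [0,1], one has ∫₀ᵗ H_{n,l}(u) e_{m,k}(u) du = 2^{n/2} ( 2 I²_{0+}H_{m,k}(t ∧ (l+0.5)/2^n) − I²_{0+}H_{m,k}(t ∧ l/2^n) − I²_{0+}H_{m,k}(t ∧ (l+1)/2^n) ), where I²_{0+} denotes the second-order iterated integral. -/

import Mathlib

open MeasureTheory Set

/-- The Haar function `H_{m,k}`. -/
noncomputable def Haar (m k : ℕ) (s : ℝ) : ℝ :=
  if s ∈ Set.Ioc ((k : ℝ) / 2 ^ m) (((k : ℝ) + 0.5) / 2 ^ m) then (2 : ℝ) ^ ((m : ℝ) / 2)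
  else if s ∈ Set.Ioc (((k : ℝ) + 0.5) / 2 ^ m) (((k : ℝ) + 1) / 2 ^ m) then
    -(2 : ℝ) ^ ((m : ℝ) / 2)
  else 0

/-- The Faber–Schauder function `e_{m,k}`, as the primitive of the Haar function. -/
noncomputable def FS (m k : ℕ) (t : ℝ) : ℝ := ∫ s in (0 : ℝ)..t, Haar m k s

/-- The second-order iterated integral `I²_{0+}`. -/
noncomputable def I2 (f : ℝ → ℝ) (t : ℝ) : ℝ := ∫ u in (0 : ℝ)..t, (t - u) * f u

/-!
On its support `(a, c]`, with midpoint `b`, the Haar function `H_{n,l}` is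
`2^{n/2} (1_{(a,∞)} - 2·1_{(b,∞)} + 1_{(c,∞)})`, so `∫₀ᵗ H_{n,l} e_{m,k}` is a combination of
the tails `∫_{t∧x}^t e_{m,k}`. As `e_{m,k}` is the primitive of `H_{m,k}`, Cauchy's formula for
repeated integration turns each `∫₀^y e_{m,k}` into `I²_{0+}H_{m,k}(y)`; it follows from
integration by parts, the primitive of an integrable function being absolutely continuous.
-/

theorem MeasureTheory.LocallyIntegrable.intervalIntegrable {g : ℝ → ℝ}
    (hg : LocallyIntegrable g volume) (a b : ℝ) : IntervalIntegrable g volume a b :=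
  (hg.integrableOn_isCompact isCompact_uIcc).intervalIntegrable

theorem integral_indicator_Ioi {g : ℝ → ℝ} (hg : LocallyIntegrable g volume) {c : ℝ}
    (hc : 0 ≤ c) (t : ℝ) :
    ∫ u in (0 : ℝ)..t, (Ioi c).indicator g u
      = (∫ u in (0 : ℝ)..t, g u) - ∫ u in (0 : ℝ)..(min t c), g u := by
  have hvanish : ∀ x ≤ c, ∫ u in (0 : ℝ)..x, (Ioi c).indicator g u = 0 := fun x hx =>
    intervalIntegral.integral_zero_ae <| Filter.Eventually.of_forall fun u hu =>
      indicator_of_notMem (not_lt.2 <| (uIoc_subset_uIcc hu).2.trans (max_le hc hx)) g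
  rcases le_total t c with htc | hct
  · rw [hvanish t htc, min_eq_left htc, sub_self]
  · have hgc := hg.indicator (s := Ioi c) measurableSet_Ioi
    rw [min_eq_right hct, intervalIntegral.integral_interval_sub_left
        (hg.intervalIntegrable 0 t) (hg.intervalIntegrable 0 c),
      ← intervalIntegral.integral_add_adjacent_intervals
        (hgc.intervalIntegrable 0 c) (hgc.intervalIntegrable c t), hvanish c le_rfl, zero_add]
    refine intervalIntegral.integral_congr_ae (Filter.Eventually.of_forall fun u hu => ?_)
    rw [uIoc_of_le hct] at hu
    exact indicator_of_mem hu.1 g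

theorem integral_primitive_eq_I2 {f : ℝ → ℝ} {x : ℝ} (hf : IntervalIntegrable f volume 0 x) :
    ∫ u in (0 : ℝ)..x, ∫ s in (0 : ℝ)..u, f s = I2 f x := by
  have hF := hf.absolutelyContinuousOnInterval_intervalIntegral left_mem_uIcc
  have hg : AbsolutelyContinuousOnInterval (fun u : ℝ => u - x) 0 x :=
    (contDiffOn_id.sub contDiffOn_const).absolutelyContinuousOnInterval
  calc ∫ u in (0 : ℝ)..x, ∫ s in (0 : ℝ)..u, f s
      = ∫ u in (0 : ℝ)..x, (∫ s in (0 : ℝ)..u, f s) * deriv (fun u : ℝ => u - x) u := by simp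
    _ = -∫ u in (0 : ℝ)..x, deriv (fun u => ∫ s in (0 : ℝ)..u, f s) u * (u - x) := by
        rw [hF.integral_mul_deriv_eq_deriv_mul hg]; simp
    _ = I2 f x := by
        rw [I2, ← intervalIntegral.integral_neg]
        refine intervalIntegral.integral_congr_ae ?_
        filter_upwards [hf.ae_hasDerivAt_integral] with u hu hu_mem
        rw [(hu (uIoc_subset_uIcc hu_mem) 0 left_mem_uIcc).deriv]
        ring

theorem Haar_mul_eq_indicator (n l : ℕ) (g : ℝ → ℝ) (u : ℝ) :
    Haar n l u * g u = (2 : ℝ) ^ ((n : ℝ) / 2) *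
      ((Ioi ((l : ℝ) / 2 ^ n)).indicator g u - 2 * (Ioi (((l : ℝ) + 0.5) / 2 ^ n)).indicator g u
        + (Ioi (((l : ℝ) + 1) / 2 ^ n)).indicator g u) := by
  have hab : (l : ℝ) / 2 ^ n < ((l : ℝ) + 0.5) / 2 ^ n := by gcongr; norm_num
  have hbc : ((l : ℝ) + 0.5) / 2 ^ n < ((l : ℝ) + 1) / 2 ^ n := by gcongr; norm_num
  simp only [Haar, indicator, mem_Ioc, mem_Ioi]
  generalize (l : ℝ) / 2 ^ n = a, ((l : ℝ) + 0.5) / 2 ^ n = b, ((l : ℝ) + 1) / 2 ^ n = c at *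
  split_ifs <;> grind

theorem locallyIntegrable_Haar (m k : ℕ) : LocallyIntegrable (Haar m k) volume := by
  have h1 : LocallyIntegrable (1 : ℝ → ℝ) volume := locallyIntegrable_const 1
  have hHaar : Haar m k = (2 : ℝ) ^ ((m : ℝ) / 2) •
      ((Ioi ((k : ℝ) / 2 ^ m)).indicator 1 - (2 : ℝ) • (Ioi (((k : ℝ) + 0.5) / 2 ^ m)).indicator 1
        + (Ioi (((k : ℝ) + 1) / 2 ^ m)).indicator 1) :=
    funext fun u => by simpa using Haar_mul_eq_indicator m k 1 u
  rw [hHaar]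
  exact (((h1.indicator measurableSet_Ioi).sub ((h1.indicator measurableSet_Ioi).smul _)).add
    (h1.indicator measurableSet_Ioi)).smul _

theorem continuous_FS (m k : ℕ) : Continuous (FS m k) :=
  intervalIntegral.continuous_primitive (locallyIntegrable_Haar m k).intervalIntegrable 0

theorem integral_Haar_mul_FS_general (m k n l : ℕ) (t : ℝ) :
    ∫ u in (0 : ℝ)..t, Haar n l u * FS m k u =
      (2 : ℝ) ^ ((n : ℝ) / 2) *
        (2 * I2 (Haar m k) (min t (((l : ℝ) + 0.5) / 2 ^ n))
          - I2 (Haar m k) (min t ((l : ℝ) / 2 ^ n))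
          - I2 (Haar m k) (min t (((l : ℝ) + 1) / 2 ^ n))) := by
  have hFS : LocallyIntegrable (FS m k) volume := (continuous_FS m k).locallyIntegrable
  have hI2 (x : ℝ) : ∫ u in (0 : ℝ)..x, FS m k u = I2 (Haar m k) x :=
    integral_primitive_eq_I2 ((locallyIntegrable_Haar m k).intervalIntegrable 0 x)
  have hind (c : ℝ) : IntervalIntegrable ((Ioi c).indicator (FS m k)) volume 0 t :=
    (hFS.indicator measurableSet_Ioi).intervalIntegrable 0 t
  have htail {c : ℝ} (hc : 0 ≤ c) : ∫ u in (0 : ℝ)..t, (Ioi c).indicator (FS m k) u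
      = I2 (Haar m k) t - I2 (Haar m k) (min t c) := by
    rw [integral_indicator_Ioi hFS hc, hI2, hI2]
  simp_rw [Haar_mul_eq_indicator]
  rw [intervalIntegral.integral_const_mul, intervalIntegral.integral_add
      ((hind _).sub ((hind _).const_mul 2)) (hind _),
    intervalIntegral.integral_sub (hind _) ((hind _).const_mul 2),
    intervalIntegral.integral_const_mul, htail (by positivity), htail (by positivity),
    htail (by positivity)]
  ring

theorem integral_Haar_mul_FS (m k n l : ℕ) (hk : k < 2 ^ m) (hl : l < 2 ^ n)
    (t : ℝ) (ht : t ∈ Set.Icc (0 : ℝ) 1) :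
    ∫ u in (0 : ℝ)..t, Haar n l u * FS m k u =
      (2 : ℝ) ^ ((n : ℝ) / 2) *
        (2 * I2 (Haar m k) (min t (((l : ℝ) + 0.5) / 2 ^ n))
          - I2 (Haar m k) (min t ((l : ℝ) / 2 ^ n))
          - I2 (Haar m k) (min t (((l : ℝ) + 1) / 2 ^ n))) :=
  integral_Haar_mul_FS_general m k n l t
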